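/- arXiv:1712.08958 — 2 statements merged into one kernel-verified Lean document; each statement's English description precedes it below -/
import Mathlib

section
/- Let h, K_H, γ, B*, β > 0, αΠ ≥ 0, set R₀ = (h + αΠ - β)/(γB*) and H* = (K_H/h)(R₀ - 1). Assume R₀ > 1. If 1 < 2/(γB*), then both eigenvalues h ± αΠ - (β + γB* + 2hH*/K_H) of the Jacobian are negative. -/
/-!
Since `2 h H*/K = 2 (R₀ - 1)` and `h + αΠ - β = R₀ γB*`, the larger eigenvalue factors as
`(R₀ - 1)(γB* - 2)`, which is negative because `R₀ > 1` and `1 < 2/(γB*)` forces `0 < γB* < 2`.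
The other eigenvalue is smaller by `2αΠ ≥ 0`.
-/

lemma pos_and_lt_of_one_lt_div {α : Type*} [Field α] [LinearOrder α] [IsStrictOrderedRing α]
    {a b : α} (ha : 0 ≤ a) (h : 1 < a / b) : 0 < b ∧ b < a := by
  rcases one_lt_div_iff.1 h with h | ⟨hb, hab⟩
  · exact h
  · exact absurd (hab.trans hb) ha.not_gt

theorem endemic_eigenvalues_negative_general (h K γ Bstar β aPi : ℝ)
    (hh : 0 < h) (hK : 0 < K)
    (haPi : 0 ≤ aPi)
    (hR0 : 1 < (h + aPi - β) / (γ * Bstar))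
    (hcond : 1 < 2 / (γ * Bstar)) :
    let R₀ := (h + aPi - β) / (γ * Bstar)
    let Hstar := (K / h) * (R₀ - 1)
    h + aPi - (β + γ * Bstar + 2 * h * Hstar / K) < 0 ∧
      h - aPi - (β + γ * Bstar + 2 * h * Hstar / K) < 0 := by
  intro R₀ Hstar
  obtain ⟨hg, hg2⟩ := pos_and_lt_of_one_lt_div zero_le_two hcond
  have hH : 2 * h * Hstar / K = 2 * (R₀ - 1) := by
    simp only [Hstar]
    field_simp
  have hR₀ : h + aPi - β = R₀ * (γ * Bstar) := (div_mul_cancel₀ _ hg.ne').symm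
  have htop : h + aPi - (β + γ * Bstar + 2 * h * Hstar / K) = (R₀ - 1) * (γ * Bstar - 2) := by
    rw [hH]
    linear_combination hR₀
  have hneg : (R₀ - 1) * (γ * Bstar - 2) < 0 :=
    mul_neg_of_pos_of_neg (sub_pos.2 hR0) (sub_neg.2 hg2)
  constructor <;> linarith

theorem endemic_eigenvalues_negative (h K γ Bstar β aPi : ℝ)
    (hh : 0 < h) (hK : 0 < K) (hγ : 0 < γ) (hB : 0 < Bstar) (hβ : 0 < β)
    (haPi : 0 ≤ aPi)
    (hR0 : 1 < (h + aPi - β) / (γ * Bstar))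
    (hcond : 1 < 2 / (γ * Bstar)) :
    let R₀ := (h + aPi - β) / (γ * Bstar)
    let Hstar := (K / h) * (R₀ - 1)
    h + aPi - (β + γ * Bstar + 2 * h * Hstar / K) < 0 ∧
      h - aPi - (β + γ * Bstar + 2 * h * Hstar / K) < 0 :=
  endemic_eigenvalues_negative_general h K γ Bstar β aPi hh hK haPi hR0 hcond
end

section
/- Let b > d > 0, K_B > 0, μ > 0. Every solution B(t) of the ODE B' = bB(1 - B/K_B) + μ - dB with B(0) > 0 converges to B* = (K_B(b-d)/(2b))(1 + sqrt(1 + 4bμ/(K_B(b-d)²))) as t → ∞. -/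
/-!
The right-hand side factors as `(b / K) * (B* - x) * (x - r)` with `r < 0 < B*`, so the equation
is logistic between its two equilibria. A level `m` with `r < m < min (B 0) B*` is never crossed
downwards, because the field is positive there; above `m` the derivative of `(B - B*) ^ 2` is at
most `-2 (b / K) (m - r)` times itself, and Grönwall gives exponential decay.
-/

open Filter Topology Real

theorem le_of_hasDerivAt_pos_of_eq {B g : ℝ → ℝ} {m : ℝ} (hB : ∀ t, HasDerivAt B (g t) t)
    (h0 : m ≤ B 0) (hg : ∀ t, 0 ≤ t → B t = m → 0 < g t) {t : ℝ} (ht : 0 ≤ t) : m ≤ B t :=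
  image_le_of_deriv_right_lt_deriv_boundary (f := fun _ => m) continuousOn_const
    (fun _ _ => hasDerivWithinAt_const _ _ m) h0 hB
    (fun s hs hBs => hg s hs.1 hBs.symm) ⟨ht, le_rfl⟩

theorem le_mul_exp_of_hasDerivAt_le_neg_mul {u u' : ℝ → ℝ} {c : ℝ}
    (hu : ∀ t, HasDerivAt u (u' t) t) (hle : ∀ t, 0 ≤ t → u' t ≤ -c * u t) {t : ℝ}
    (ht : 0 ≤ t) : u t ≤ u 0 * exp (-c * t) := by
  have := le_gronwallBound_of_liminf_deriv_right_le (K := -c) (ε := 0)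
    (fun x _ => (hu x).continuousAt.continuousWithinAt)
    (fun x _ _ hr => (hu x).hasDerivWithinAt.liminf_right_slope_le hr) le_rfl
    (fun x hx => by simpa using hle x hx.1) t ⟨ht, le_rfl⟩
  simpa [gronwallBound_ε0] using this

theorem tendsto_of_sq_sub_le_mul_exp {B : ℝ → ℝ} {p C c : ℝ} (hc : 0 < c)
    (hle : ∀ t, 0 ≤ t → (B t - p) ^ 2 ≤ C * exp (-c * t)) : Tendsto B atTop (𝓝 p) := by
  have hexp : Tendsto (fun t => C * exp (-c * t)) atTop (𝓝 0) := by
    simpa using (tendsto_exp_atBot.comp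
      (tendsto_id.const_mul_atTop_of_neg (neg_neg_of_pos hc))).const_mul C
  have hsq : Tendsto (fun t => (B t - p) ^ 2) atTop (𝓝 0) :=
    tendsto_of_tendsto_of_tendsto_of_le_of_le' tendsto_const_nhds hexp
      (Eventually.of_forall fun t => sq_nonneg _) (eventually_atTop.mpr ⟨0, hle⟩)
  rw [tendsto_iff_norm_sub_tendsto_zero]
  simpa [Function.comp_def, sqrt_sq_eq_abs] using (continuous_sqrt.tendsto 0).comp hsq

theorem tendsto_of_hasDerivAt_mul_sub_mul_sub {B : ℝ → ℝ} {a p q : ℝ} (ha : 0 < a) (hqp : q < p)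
    (hB : ∀ t, HasDerivAt B (a * (p - B t) * (B t - q)) t) (h0 : q < B 0) :
    Tendsto B atTop (𝓝 p) := by
  obtain ⟨m, hqm, hm⟩ := exists_between (lt_min h0 hqp)
  obtain ⟨hm0, hmp⟩ := lt_min_iff.mp hm
  have hbarrier : ∀ t, 0 ≤ t → m ≤ B t := fun t =>
    le_of_hasDerivAt_pos_of_eq hB hm0.le fun s _ hs => by
      rw [hs]; exact mul_pos (mul_pos ha (by linarith)) (by linarith)
  have hsq : ∀ t, HasDerivAt (fun t => (B t - p) ^ 2) (-2 * a * (B t - q) * (B t - p) ^ 2) t := by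
    intro t
    have h : HasDerivAt (fun t => (B t - p) ^ 2)
        (2 * (B t - p) * (a * (p - B t) * (B t - q))) t := by
      simpa using ((hB t).sub_const p).fun_pow 2
    exact h.congr_deriv (by ring)
  refine tendsto_of_sq_sub_le_mul_exp (c := 2 * a * (m - q))
    (mul_pos (mul_pos two_pos ha) (sub_pos.mpr hqm)) fun t ht =>
    le_mul_exp_of_hasDerivAt_le_neg_mul hsq (fun s hs => ?_) ht
  have := mul_nonneg (mul_nonneg ha.le (sq_nonneg (B s - p))) (sub_nonneg.mpr (hbarrier s hs))
  nlinarith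

theorem logistic_irrigation_eq_mul_sub_mul_sub {b d K μ s : ℝ} (hb : b ≠ 0) (hK : K ≠ 0)
    (hbd : b - d ≠ 0) (hs : s ^ 2 = 1 + 4 * b * μ / (K * (b - d) ^ 2)) (x : ℝ) :
    b * x * (1 - x / K) + μ - d * x =
      b / K * (K * (b - d) / (2 * b) * (1 + s) - x) * (x - K * (b - d) / (2 * b) * (1 - s)) := by
  have hs' : K * (b - d) ^ 2 * s ^ 2 = K * (b - d) ^ 2 + 4 * b * μ := by
    rw [hs]; field_simp
  field_simp
  linear_combination (-K) * hs'

theorem bacteria_global_convergence (b d K μ : ℝ)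
    (hbd : d < b) (hd : 0 < d) (hK : 0 < K) (hμ : 0 < μ)
    (B : ℝ → ℝ)
    (hODE : ∀ t : ℝ, HasDerivAt B (b * B t * (1 - B t / K) + μ - d * B t) t)
    (h0 : 0 < B 0) :
    Filter.Tendsto B Filter.atTop
      (nhds ((K * (b - d) / (2 * b)) *
        (1 + Real.sqrt (1 + 4 * b * μ / (K * (b - d) ^ 2))))) := by
  have hb : 0 < b := hd.trans hbd
  have hbd' : 0 < b - d := sub_pos.mpr hbd
  set s := sqrt (1 + 4 * b * μ / (K * (b - d) ^ 2))
  have hs : 1 < s := by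
    rw [lt_sqrt zero_le_one]
    have : 0 < 4 * b * μ / (K * (b - d) ^ 2) := by positivity
    linarith
  have hA : 0 < K * (b - d) / (2 * b) := by positivity
  have hfield := logistic_irrigation_eq_mul_sub_mul_sub (μ := μ) hb.ne' hK.ne' hbd'.ne'
    (sq_sqrt (by positivity))
  refine tendsto_of_hasDerivAt_mul_sub_mul_sub (q := K * (b - d) / (2 * b) * (1 - s))
    (div_pos hb hK) ?_ (fun t => ?_) ?_
  · gcongr; linarith
  · rw [← hfield]; exact hODE t
  · exact (mul_neg_of_pos_of_neg hA (by linarith)).trans h0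
end
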